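/- Let Ω ⊆ ℂⁿ be a bounded open set and let S ⊆ Ω be relatively closed in Ω with Lebesgue measure zero. Let 0 < p < ∞ be a real number. Then the set of smooth functions φ : ℂⁿ → ℂ with compact support contained in Ω that vanish on an open neighborhood of S is dense in L^p(Ω): for every measurable u : Ω → ℂ with ∫_Ω |u|^p dV < ∞ and every ε > 0 there exists such a φ with ∫_Ω |u − φ|^p dV < ε. -/

import Mathlib

open MeasureTheory Complex

noncomputable section

/-- The `j`-th Wirtinger derivative `∂̄_j u (z)`. -/
def wirtingerDbar {n : ℕ} (u : (Fin n → ℂ) → ℂ) (j : Fin n) (z : Fin n → ℂ) : ℂ :=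
  (1 / 2 : ℂ) * (fderiv ℝ u z (Pi.single j 1) + Complex.I * fderiv ℝ u z (Pi.single j Complex.I))

/-- Coefficient of `∂̄ u` (for a `(0,s)`-form `u`) at a strictly increasing `(s+1)`-tuple `K`. -/
def dbarCoeff {n s : ℕ} (u : (Fin s → Fin n) → (Fin n → ℂ) → ℂ)
    (K : Fin (s + 1) → Fin n) (z : Fin n → ℂ) : ℂ :=
  ∑ t : Fin (s + 1), (-1 : ℂ) ^ (t : ℕ) * wirtingerDbar (u (t.removeNth K)) (K t) z

/-- A `(0,q)`-form whose coefficients are smooth and bounded on `Ω`. -/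
def SmoothBoundedForm {n : ℕ} (Ω : Set (Fin n → ℂ)) (q : ℕ)
    (F : (Fin q → Fin n) → (Fin n → ℂ) → ℂ) : Prop :=
  ∀ J : Fin q → Fin n, StrictMono J →
    ContDiffOn ℝ (⊤ : ℕ∞) (F J) Ω ∧ ∃ C : ℝ, ∀ z ∈ Ω, ‖F J z‖ ≤ C

/-- `Ω` is `L^∞`-pseudoconvex: every smooth bounded `∂̄`-closed `(0,q)`-form (`1 ≤ q ≤ n`)
has a smooth bounded `(0,q-1)`-form solving `∂̄ G = F`. -/
def LinftyPseudoconvex {n : ℕ} (Ω : Set (Fin n → ℂ)) : Prop :=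
  ∀ q : ℕ, q + 1 ≤ n →
    ∀ F : (Fin (q + 1) → Fin n) → (Fin n → ℂ) → ℂ,
      SmoothBoundedForm Ω (q + 1) F →
      (∀ K : Fin (q + 2) → Fin n, StrictMono K → ∀ z ∈ Ω, dbarCoeff F K z = 0) →
      ∃ G : (Fin q → Fin n) → (Fin n → ℂ) → ℂ,
        SmoothBoundedForm Ω q G ∧
        ∀ K : Fin (q + 1) → Fin n, StrictMono K → ∀ z ∈ Ω, dbarCoeff G K z = F K z

/-- `u ∈ H^∞(Ω)`: bounded holomorphic. -/
def BoundedHolo {n : ℕ} (Ω : Set (Fin n → ℂ)) (u : (Fin n → ℂ) → ℂ) : Prop :=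
  DifferentiableOn ℂ u Ω ∧ ∃ C : ℝ, ∀ z ∈ Ω, ‖u z‖ ≤ C

/-- Membership in the algebra `H^∞(Ω)[conj f₁,…,conj f_m]`. -/
def InHinftyAlg {n m : ℕ} (Ω : Set (Fin n → ℂ)) (f : Fin m → (Fin n → ℂ) → ℂ)
    (h : (Fin n → ℂ) → ℂ) : Prop :=
  ∃ (S : Finset (Fin m → ℕ)) (c : (Fin m → ℕ) → (Fin n → ℂ) → ℂ),
    (∀ α ∈ S, BoundedHolo Ω (c α)) ∧
    ∀ z ∈ Ω, h z = ∑ α ∈ S, c α z * ∏ j, (starRingEnd ℂ) (f j z) ^ α j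

/-- `Ω_f`: points of `Ω` that are non-isolated in their own fiber `f⁻¹(f z)`. -/
def OmegaSing {n m : ℕ} (Ω : Set (Fin n → ℂ)) (f : Fin m → (Fin n → ℂ) → ℂ) :
    Set (Fin n → ℂ) :=
  {z | z ∈ Ω ∧ ∀ U : Set (Fin n → ℂ), IsOpen U → z ∈ U →
    ∃ w, w ∈ U ∩ Ω ∧ (∀ j, f j w = f j z) ∧ w ≠ z}

/-- The complex Jacobian matrix `(∂ f_j / ∂ z_k)`. -/
def jacobianMatrix {n m : ℕ} (f : Fin m → (Fin n → ℂ) → ℂ) (z : Fin n → ℂ) :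
    Matrix (Fin m) (Fin n) ℂ :=
  Matrix.of fun j k => fderiv ℂ (f j) z (Pi.single k 1)

/-- Membership in `Γ^∞_{(r,s)}(Ω)`: smooth bounded coefficients. -/
def IsGammaInf {n m : ℕ} (r s : ℕ) (Ω : Set (Fin n → ℂ))
    (W : (Fin r → Fin m) → (Fin s → Fin n) → (Fin n → ℂ) → ℂ) : Prop :=
  ∀ I : Fin r → Fin m, StrictMono I → ∀ J : Fin s → Fin n, StrictMono J →
    ContDiffOn ℝ (⊤ : ℕ∞) (W I J) Ω ∧ ∃ C : ℝ, ∀ z ∈ Ω, ‖W I J z‖ ≤ C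

/-- Support of `W ∈ Γ^∞_{(r,s)}(Ω)`. -/
def gammaSupport {n m : ℕ} (r s : ℕ) (Ω : Set (Fin n → ℂ))
    (W : (Fin r → Fin m) → (Fin s → Fin n) → (Fin n → ℂ) → ℂ) : Set (Fin n → ℂ) :=
  closure (⋃ I : Fin r → Fin m, ⋃ J : Fin s → Fin n,
    {z | z ∈ Ω ∧ StrictMono I ∧ StrictMono J ∧ W I J z ≠ 0})

open Classical in
/-- The Koszul contraction `T_f` sending `Γ^∞_{(r,s)}` to `Γ^∞_{(r-1,s)}`:
`(T_f W)_{I,J} = Σ_{k ∉ I} (−1)^{ε(k,I)} f_k W_{I∪{k},J}`, coded by summing over the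
strictly increasing `r`-tuples `I'` obtained from `I` by inserting an element at position `t`. -/
def koszulT {n m : ℕ} (r s : ℕ) (f : Fin m → (Fin n → ℂ) → ℂ)
    (W : (Fin r → Fin m) → (Fin s → Fin n) → (Fin n → ℂ) → ℂ)
    (I : Fin (r - 1) → Fin m) (J : Fin s → Fin n) (z : Fin n → ℂ) : ℂ :=
  ∑ I' : Fin r → Fin m, ∑ t : Fin r,
    if StrictMono I' ∧ Set.range I = Set.range I' \ {I' t}
    then (-1 : ℂ) ^ (t : ℕ) * f (I' t) z * W I' J z else 0

/-- `u` is holomorphic on `Ω` and square-integrable: a representative of an element of `A²(Ω)`. -/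
def Holo2 {n : ℕ} (Ω : Set (Fin n → ℂ)) (u : (Fin n → ℂ) → ℂ) : Prop :=
  DifferentiableOn ℂ u Ω ∧ MemLp u 2 (volume.restrict Ω)

/-!
Since `S = C ∩ Ω` is null, `Lᵖ(Ω) = Lᵖ(Ω \ C)` with `Ω \ C` open, and a function with
`tsupport φ ⊆ Ω \ C` vanishes on the open neighbourhood `(tsupport φ)ᶜ` of `S`. On an open set `U`,
continuous compactly supported functions on the locally compact subspace `U`, extended by zero,
are dense in `Lᵖ(U)`, and a uniform smooth approximation of such a function with support inside
its support is still compactly supported in `U`. For `p < 1` the quasi-triangle inequality of `Lᵖ` is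
enough to combine the two approximations.
-/

open Set Function
open scoped ENNReal

namespace MeasureTheory

variable {α F : Type*} [NormedAddCommGroup F] {p : ℝ≥0∞}

theorem lintegral_ofReal_norm_rpow_eq_eLpNorm_rpow [MeasurableSpace α] {μ : Measure α}
    {f : α → F} {q : ℝ} (hq : 0 < q) :
    ∫⁻ x, ENNReal.ofReal (‖f x‖ ^ q) ∂μ = eLpNorm f (ENNReal.ofReal q) μ ^ q := by
  rw [← one_mul (ENNReal.ofReal q), ← eLpNorm_norm_rpow f hq, eLpNorm_one_eq_lintegral_enorm]
  exact lintegral_congr fun x ↦ (Real.enorm_of_nonneg (by positivity)).symm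

theorem MemLp.exists_hasCompactSupport_tsupport_subset_eLpNorm_sub_le [TopologicalSpace α]
    [TopologicalSpace.MetrizableSpace α] [LocallyCompactSpace α] [MeasurableSpace α]
    [BorelSpace α] [NormedSpace ℝ F] {μ : Measure α} [μ.Regular] (hp : p ≠ ∞) {U : Set α}
    (hU : IsOpen U) {f : α → F} (hf : MemLp f p (μ.restrict U)) {ε : ℝ≥0∞} (hε : ε ≠ 0) :
    ∃ g : α → F, Continuous g ∧ HasCompactSupport g ∧ tsupport g ⊆ U ∧
      eLpNorm (f - g) p (μ.restrict U) ≤ ε := by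
  have hval := measurePreserving_subtype_coe (μa := μ) hU.measurableSet
  have := hU.locallyCompactSpace
  have := Measure.Regular.comap' μ hU.isOpenEmbedding_subtypeVal
  obtain ⟨g, hg_supp, hg_le, hg_cont, -⟩ :=
    (hf.comp_measurePreserving hval).exists_hasCompactSupport_eLpNorm_sub_le hp hε
  have hext_cont := hg_supp.continuous_extend_zero hU hg_cont
  refine ⟨Subtype.val.extend g 0, hext_cont, hg_supp.extend_zero continuous_subtype_val,
    (hg_supp.tsupport_extend_zero_subset continuous_subtype_val).trans
      (Subtype.coe_image_subset _ _), ?_⟩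
  have hext_meas := (hext_cont.stronglyMeasurable_of_hasCompactSupport
    (hg_supp.extend_zero continuous_subtype_val)).aestronglyMeasurable (μ := μ.restrict U)
  rwa [← eLpNorm_comp_measurePreserving (hf.1.sub hext_meas) hval,
    Pi.sub_comp, extend_comp Subtype.val_injective]

variable {E : Type*} [NormedAddCommGroup E] [NormedSpace ℝ E] [FiniteDimensional ℝ E]
  [MeasurableSpace E] [BorelSpace E]

theorem _root_.HasCompactSupport.exists_contDiff_support_subset_eLpNorm_sub_le
    [NormedSpace ℝ F] (μ : Measure E) [IsFiniteMeasureOnCompacts μ] (hp : p ≠ ∞) {g : E → F}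
    (hg : HasCompactSupport g) (hg_cont : Continuous g) {ε : ℝ≥0∞} (hε : ε ≠ 0) :
    ∃ φ : E → F, ContDiff ℝ (⊤ : ℕ∞) φ ∧ support φ ⊆ support g ∧ eLpNorm (g - φ) p μ ≤ ε := by
  obtain ⟨δ, hδ_pos, hδ⟩ := ENNReal.exists_nnreal_pos_mul_lt
    (ENNReal.rpow_ne_top_of_nonneg (one_div_nonneg.2 ENNReal.toReal_nonneg)
      (hg.measure_lt_top (μ := μ)).ne) hε
  obtain ⟨φ, hφ_smooth, hφ_dist, hφ_supp⟩ :=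
    hg_cont.exists_contDiff_approx ⊤ continuous_const fun _ ↦ (NNReal.coe_pos.2 hδ_pos)
  refine ⟨φ, hφ_smooth, hφ_supp, le_trans ?_ hδ.le⟩
  rw [← ENNReal.ofReal_coe_nnreal]
  exact eLpNorm_sub_le_of_dist_bdd μ hp (isClosed_tsupport g).measurableSet δ.2
    (fun x ↦ (dist_comm _ _).trans_le (hφ_dist x).le) (subset_tsupport g)
    (hφ_supp.trans (subset_tsupport g))

theorem MemLp.exists_contDiff_tsupport_subset_eLpNorm_sub_lt [NormedSpace ℝ F] {μ : Measure E}
    [μ.Regular] (hp : p ≠ ∞) {U : Set E} (hU : IsOpen U) {f : E → F}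
    (hf : MemLp f p (μ.restrict U)) {ε : ℝ≥0∞} (hε : ε ≠ 0) :
    ∃ φ : E → F, ContDiff ℝ (⊤ : ℕ∞) φ ∧ HasCompactSupport φ ∧ tsupport φ ⊆ U ∧
      eLpNorm (f - φ) p (μ.restrict U) < ε := by
  obtain ⟨η, hη_pos, hη⟩ := exists_Lp_half F (μ.restrict U) p hε
  obtain ⟨g, hg_cont, hg_supp, hgU, hfg⟩ :=
    hf.exists_hasCompactSupport_tsupport_subset_eLpNorm_sub_le hp hU hη_pos.ne'
  obtain ⟨φ, hφ_smooth, hφg, hgφ⟩ :=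
    hg_supp.exists_contDiff_support_subset_eLpNorm_sub_le (μ.restrict U) hp hg_cont hη_pos.ne'
  have hφ_tsupp : tsupport φ ⊆ tsupport g := closure_mono hφg
  refine ⟨φ, hφ_smooth, hg_supp.mono hφg, hφ_tsupp.trans hgU, ?_⟩
  have hg_meas := hg_cont.aestronglyMeasurable (μ := μ.restrict U)
  simpa only [sub_add_sub_cancel] using hη (f - g) (g - φ) (hf.1.sub hg_meas)
    (hg_meas.sub hφ_smooth.continuous.aestronglyMeasurable) hfg hgφ

end MeasureTheory

theorem smoothVanishingDense_general {n : ℕ} (Ω : Set (Fin n → ℂ))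
    (hΩopen : IsOpen Ω)
    (S : Set (Fin n → ℂ)) (hS : ∃ C : Set (Fin n → ℂ), IsClosed C ∧ S = C ∩ Ω)
    (hS0 : volume S = 0) (p : ℝ) (hp : 0 < p) :
    ∀ u : (Fin n → ℂ) → ℂ, Measurable u →
      (∫⁻ z in Ω, ENNReal.ofReal (‖u z‖ ^ p)) < ⊤ →
      ∀ ε : ℝ, 0 < ε → ∃ φ : (Fin n → ℂ) → ℂ,
        ContDiff ℝ (⊤ : ℕ∞) φ ∧ HasCompactSupport φ ∧ tsupport φ ⊆ Ω ∧
        (∃ U : Set (Fin n → ℂ), IsOpen U ∧ S ⊆ U ∧ ∀ z ∈ U, φ z = 0) ∧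
        (∫⁻ z in Ω, ENNReal.ofReal (‖u z - φ z‖ ^ p)) < ENNReal.ofReal ε := by
  intro u hu hu_int ε hε
  obtain ⟨C, hC, rfl⟩ := hS
  have hΩC : volume.restrict Ω = volume.restrict (Ω \ C) :=
    (Measure.restrict_congr_set (sdiff_ae_eq_self.2 (by rwa [inter_comm]))).symm
  rw [hΩC, lintegral_ofReal_norm_rpow_eq_eLpNorm_rpow hp,
    ENNReal.rpow_lt_top_iff_of_pos hp] at hu_int
  obtain ⟨φ, hφ_smooth, hφ_supp, hφ_tsupp, hφ_approx⟩ :=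
    MemLp.exists_contDiff_tsupport_subset_eLpNorm_sub_lt ENNReal.ofReal_ne_top
      (hΩopen.sdiff hC) ⟨hu.aestronglyMeasurable, hu_int⟩
      (ENNReal.rpow_pos (ENNReal.ofReal_pos.2 hε) ENNReal.ofReal_ne_top).ne'
  refine ⟨φ, hφ_smooth, hφ_supp, hφ_tsupp.trans sdiff_subset,
    ⟨(tsupport φ)ᶜ, (isClosed_tsupport φ).isOpen_compl, fun z hz hzφ ↦ (hφ_tsupp hzφ).2 hz.1,
      fun z ↦ image_eq_zero_of_notMem_tsupport⟩, ?_⟩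
  rw [hΩC]
  exact (lintegral_ofReal_norm_rpow_eq_eLpNorm_rpow (f := u - φ) hp).trans_lt
    ((ENNReal.lt_rpow_inv_iff hp).1 hφ_approx)

/-- Let `Ω ⊆ ℂⁿ` be a bounded open set and `S ⊆ Ω` relatively closed in `Ω` with Lebesgue
measure zero, and let `0 < p < ∞`. The smooth functions with compact support contained in
`Ω` vanishing on a neighborhood of `S` are dense in `L^p(Ω)`. -/
theorem smoothVanishingDense {n : ℕ} (Ω : Set (Fin n → ℂ))
    (hΩopen : IsOpen Ω) (hΩbdd : Bornology.IsBounded Ω)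
    (S : Set (Fin n → ℂ)) (hS : ∃ C : Set (Fin n → ℂ), IsClosed C ∧ S = C ∩ Ω)
    (hS0 : volume S = 0) (p : ℝ) (hp : 0 < p) :
    ∀ u : (Fin n → ℂ) → ℂ, Measurable u →
      (∫⁻ z in Ω, ENNReal.ofReal (‖u z‖ ^ p)) < ⊤ →
      ∀ ε : ℝ, 0 < ε → ∃ φ : (Fin n → ℂ) → ℂ,
        ContDiff ℝ (⊤ : ℕ∞) φ ∧ HasCompactSupport φ ∧ tsupport φ ⊆ Ω ∧
        (∃ U : Set (Fin n → ℂ), IsOpen U ∧ S ⊆ U ∧ ∀ z ∈ U, φ z = 0) ∧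
        (∫⁻ z in Ω, ENNReal.ofReal (‖u z - φ z‖ ^ p)) < ENNReal.ofReal ε :=
  smoothVanishingDense_general Ω hΩopen S hS hS0 p hp
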